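/- arXiv:2312.14529 — 3 statements merged into one kernel-verified Lean document; each statement's English description precedes it below -/
import Mathlib

section
/- Let (P, v) be a cooperative game that is monotone (B ⊆ B' implies v(B) ≤ v(B')) and binary (v takes values only in {0,1}), and suppose there exists s ∈ P with v({s}) = 1. Then for every player p ∈ P, Sh(P,v,p) ≤ Sh(P,v,s), where Sh denotes the Shapley value. -/
/-- The Shapley value of player `p`, defined via the permutation formula:
the average over all orderings of the players of the marginal contribution of `p`. -/
def shapleyValue {α : Type*} [Fintype α] [DecidableEq α] (v : Finset α → ℚ) (p : α) : ℚ :=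
  (1 / ((Fintype.card α).factorial : ℚ)) *
    ∑ σ : Fin (Fintype.card α) ≃ α,
      (v (insert p (Finset.univ.filter fun x => σ.symm x < σ.symm p)) -
        v (Finset.univ.filter fun x => σ.symm x < σ.symm p))

/-!
Pair each ordering `σ` with `σ` followed by the transposition of `p` and `s`, so that `s`
takes the place of `p`. If `s` precedes `p` in `σ`, the coalition before `p` already has
maximal worth, so `p` contributes nothing, while `s` contributes something nonnegative by
monotonicity. Otherwise `s` joins exactly the coalition `B` that `p` joined, and
`v (B ∪ {p}) ≤ v (B ∪ {s})` because coalitions containing `s` have maximal worth.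
Summing over all orderings compares the Shapley values.
-/

namespace Shapley

open Finset

variable {α : Type*} [Fintype α] [DecidableEq α]

def predecessors (σ : Fin (Fintype.card α) ≃ α) (p : α) : Finset α :=
  univ.filter fun x => σ.symm x < σ.symm p

def marginalContribution (v : Finset α → ℚ) (σ : Fin (Fintype.card α) ≃ α) (p : α) : ℚ :=
  v (insert p (predecessors σ p)) - v (predecessors σ p)

theorem shapleyValue_eq_sum_marginalContribution (v : Finset α → ℚ) (p : α) :
    shapleyValue v p =
      (1 / ((Fintype.card α).factorial : ℚ)) * ∑ σ, marginalContribution v σ p :=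
  rfl

theorem predecessors_trans_swap_of_notMem {σ : Fin (Fintype.card α) ≃ α} {p s : α}
    (hs : s ∉ predecessors σ p) :
    predecessors (σ.trans (Equiv.swap p s)) s = predecessors σ p := by
  simp only [predecessors, mem_filter, mem_univ, true_and] at hs
  ext x
  simp only [predecessors, mem_filter, mem_univ, true_and, Equiv.symm_trans_apply,
    Equiv.symm_swap, Equiv.swap_apply_right]
  rcases eq_or_ne x p with rfl | hxp
  · simpa [Equiv.swap_apply_left] using hs
  rcases eq_or_ne x s with rfl | hxs
  · simpa [Equiv.swap_apply_right] using hs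
  · rw [Equiv.swap_apply_of_ne_of_ne hxp hxs]

theorem marginalContribution_le_trans_swap {v : Finset α → ℚ} (hmono : Monotone v) {s : α}
    (hmax : ∀ B C : Finset α, s ∈ B → v C ≤ v B) (σ : Fin (Fintype.card α) ≃ α) (p : α) :
    marginalContribution v σ p ≤ marginalContribution v (σ.trans (Equiv.swap p s)) s := by
  unfold marginalContribution
  by_cases hsB : s ∈ predecessors σ p
  · have hp_null : v (insert p (predecessors σ p)) ≤ v (predecessors σ p) := hmax _ _ hsB
    have hs_nonneg := hmono (subset_insert s (predecessors (σ.trans (Equiv.swap p s)) s))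
    linarith
  · rw [predecessors_trans_swap_of_notMem hsB]
    have := hmax (insert s (predecessors σ p)) (insert p (predecessors σ p)) (mem_insert_self _ _)
    linarith

theorem shapleyValue_le_of_forall_mem_isMax {v : Finset α → ℚ} (hmono : Monotone v) {s : α}
    (hmax : ∀ B C : Finset α, s ∈ B → v C ≤ v B) (p : α) :
    shapleyValue v p ≤ shapleyValue v s := by
  rw [shapleyValue_eq_sum_marginalContribution, shapleyValue_eq_sum_marginalContribution]
  refine mul_le_mul_of_nonneg_left ?_ (by positivity)
  calc ∑ σ, marginalContribution v σ p
      ≤ ∑ σ, marginalContribution v (σ.trans (Equiv.swap p s)) s := by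
        gcongr with σ
        exact marginalContribution_le_trans_swap hmono hmax σ p
    _ = ∑ σ, marginalContribution v σ s :=
        Fintype.sum_equiv ((Equiv.refl _).equivCongr (Equiv.swap p s)) _ _ fun σ => by
          simp only [Equiv.equivCongr_refl_left]

end Shapley

theorem singleton_support_max_shapley_general
    {α : Type*} [Fintype α] [DecidableEq α]
    (v : Finset α → ℚ)
    (hmono : ∀ B B' : Finset α, B ⊆ B' → v B ≤ v B')
    (hbin : ∀ B : Finset α, v B = 0 ∨ v B = 1)
    (s : α) (hs : v {s} = 1) :
    ∀ p : α, shapleyValue v p ≤ shapleyValue v s := by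
  have hmax : ∀ B C : Finset α, s ∈ B → v C ≤ v B := fun B C hsB =>
    calc v C ≤ 1 := by rcases hbin C with h | h <;> simp [h]
      _ = v {s} := hs.symm
      _ ≤ v B := hmono _ _ (Finset.singleton_subset_iff.mpr hsB)
  exact Shapley.shapleyValue_le_of_forall_mem_isMax (fun _ _ h => hmono _ _ h) hmax

/-- In a monotone binary cooperative game, a player `s` with `v {s} = 1` has
maximal Shapley value. -/
theorem singleton_support_max_shapley
    {α : Type*} [Fintype α] [DecidableEq α]
    (v : Finset α → ℚ) (hv : v ∅ = 0)
    (hmono : ∀ B B' : Finset α, B ⊆ B' → v B ≤ v B')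
    (hbin : ∀ B : Finset α, v B = 0 ∨ v B = 1)
    (s : α) (hs : v {s} = 1) :
    ∀ p : α, shapleyValue v p ≤ shapleyValue v s :=
  singleton_support_max_shapley_general v hmono hbin s hs
end

section
/- Fix a positive integer m. For each n ∈ ℕ, the (n+1)×(n+1) matrix M with entries M[i][j] = (i + j)! for 0 ≤ i, j ≤ n is invertible over ℚ. -/
/-!
Writing `(i + j)! = i! j! · C(i + j, i)` and expanding `C(i + j, i) = ∑ₖ C(i, k) C(j, k)` by
Vandermonde's identity factors the matrix as `B Bᵀ`, where `B i k = i! C(i, k)` is lower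
triangular with diagonal `i!`. Hence its determinant is `∏ᵢ (i!)²`.
-/

open Finset Matrix Nat

theorem Nat.sum_range_choose_mul_choose {i n : ℕ} (j : ℕ) (hi : i < n) :
    ∑ k ∈ range n, i.choose k * j.choose k = (i + j).choose i := by
  have h_vanish : ∀ k ∈ range n, k ∉ range (i + 1) → i.choose k * j.choose k = 0 := by
    intro k _ hk
    rw [choose_eq_zero_of_lt (by simpa using hk), zero_mul]
  rw [← sum_subset (range_subset_range.mpr hi) h_vanish, add_comm i j, add_choose_eq,
    Nat.sum_antidiagonal_eq_sum_range_succ_mk]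
  refine sum_congr rfl fun k hk => ?_
  rw [choose_symm (by simpa [Nat.lt_succ_iff] using hk), mul_comm]

theorem Nat.factorial_add_eq_sum_range {i n : ℕ} (j : ℕ) (hi : i < n) :
    (i + j)! = ∑ k ∈ range n, (i ! * i.choose k) * (j ! * j.choose k) := by
  calc (i + j)! = (i + j).choose i * i ! * j ! := by
        rw [choose_symm_add, add_choose_mul_factorial_mul_factorial]
    _ = ∑ k ∈ range n, (i ! * i.choose k) * (j ! * j.choose k) := by
      rw [← sum_range_choose_mul_choose j hi, sum_mul, sum_mul]
      exact sum_congr rfl fun k _ => by ring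

section FactorialChooseMatrix

variable (R : Type*) [CommRing R] (n : ℕ)

def factorialChooseMatrix : Matrix (Fin n) (Fin n) R :=
  of fun i k => ((i : ℕ)! * (i : ℕ).choose k : ℕ)

theorem factorialChooseMatrix_mul_transpose :
    factorialChooseMatrix R n * (factorialChooseMatrix R n)ᵀ =
      of fun i j : Fin n => (((i : ℕ) + j)! : R) := by
  ext i j
  rw [of_apply, factorial_add_eq_sum_range j i.isLt, ← Fin.sum_univ_eq_sum_range]
  simp [factorialChooseMatrix, mul_apply]

theorem isLowerTriangular_factorialChooseMatrix :
    (factorialChooseMatrix R n).IsLowerTriangular := by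
  intro i k hik
  rw [factorialChooseMatrix, of_apply, choose_eq_zero_of_lt (by simpa using hik), mul_zero,
    cast_zero]

theorem det_factorialChooseMatrix :
    (factorialChooseMatrix R n).det = ∏ i : Fin n, ((i : ℕ)! : R) := by
  rw [det_of_isLowerTriangular _ (isLowerTriangular_factorialChooseMatrix R n)]
  simp [factorialChooseMatrix]

theorem det_factorial_add_matrix :
    (of fun i j : Fin n => (((i : ℕ) + j)! : R)).det = ∏ i : Fin n, ((i : ℕ)! : R) ^ 2 := by
  rw [← factorialChooseMatrix_mul_transpose, det_mul, det_transpose, det_factorialChooseMatrix,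
    ← prod_mul_distrib]
  simp only [sq]

end FactorialChooseMatrix

theorem factorial_matrix_invertible_general (n : ℕ) :
    (Matrix.of fun i j : Fin (n + 1) => (((i : ℕ) + (j : ℕ)).factorial : ℚ)).det ≠ 0 := by
  rw [det_factorial_add_matrix]
  positivity

/-- The (n+1)×(n+1) matrix with entries `(i+j)!` is invertible over ℚ. -/
theorem factorial_matrix_invertible (m : ℕ) (hm : 0 < m) (n : ℕ) :
    (Matrix.of fun i j : Fin (n + 1) => (((i : ℕ) + (j : ℕ)).factorial : ℚ)).det ≠ 0 :=
  factorial_matrix_invertible_general n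
end

section
/- Let n, i, m ∈ ℕ and let G_0, …, G_n be rational numbers. Define Sh^i := Σ_{j=0}^{n} ((j+m)! · (n+i−j)! / (n+i+m+1)!) · G_j. Then the (n+1)×(n+1) linear system expressing (Sh^0, …, Sh^n) in terms of (G_0, …, G_n) has an invertible coefficient matrix; i.e., the matrix A with A[i][j] = (j+m)!(n+i−j)!/(n+i+m+1)! for 0 ≤ i,j ≤ n is invertible over ℚ. -/
/-!
Scaling the rows by `(n+i+m+1)!` and the columns by `1/(j+m)!` leaves the matrix `(n+i-j)!`,
which is the Hankel matrix `(i+j)!` with its columns reversed. That one factors as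
`diag(i!) · C(i+j, i) · diag(j!)`, and `C(i+j, i) = L Lᵀ` for the unitriangular Pascal matrix
`L = C(i, j)` by Vandermonde's identity, so its determinant is `∏ i!²`.
-/

open Finset Matrix Nat

theorem Nat.sum_range_choose_mul_choose_eq_add_choose {N i : ℕ} (hi : i < N) (j : ℕ) :
    ∑ k ∈ range N, i.choose k * j.choose k = (i + j).choose i := by
  have h_trunc : ∑ k ∈ range (i + 1), i.choose k * j.choose k =
      ∑ k ∈ range N, i.choose k * j.choose k :=
    sum_subset (range_subset_range.2 hi) fun k _ hk => by
      rw [choose_eq_zero_of_lt (by simpa using hk), zero_mul]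
  rw [← h_trunc, add_choose_eq, ← Finset.Nat.sum_antidiagonal_swap,
    Finset.Nat.sum_antidiagonal_eq_sum_range_succ_mk]
  refine sum_congr rfl fun k hk => ?_
  rw [Prod.fst_swap, Prod.snd_swap, choose_symm (by simpa [Nat.lt_succ_iff] using hk)]

namespace Matrix

variable (R : Type*) [CommRing R] (N : ℕ)

def pascal : Matrix (Fin N) (Fin N) R :=
  of fun i j => ((i : ℕ).choose j : R)

theorem det_pascal : (pascal R N).det = 1 := by
  rw [det_of_isLowerTriangular _ fun i j hij => by
    simp [pascal, choose_eq_zero_of_lt (show (i : ℕ) < j from hij)]]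
  simp [pascal]

theorem pascal_mul_transpose :
    pascal R N * (pascal R N)ᵀ = of fun i j : Fin N => (((i : ℕ) + j).choose i : R) := by
  ext i j
  rw [of_apply, ← sum_range_choose_mul_choose_eq_add_choose i.isLt, Nat.cast_sum,
    ← Fin.sum_univ_eq_sum_range]
  simp [pascal, mul_apply]

variable {R N}

theorem det_add_choose : (of fun i j : Fin N => (((i : ℕ) + j).choose i : R)).det = 1 := by
  rw [← pascal_mul_transpose, det_mul, det_transpose, det_pascal, one_mul]

theorem det_factorial_add :
    (of fun i j : Fin N => (((i : ℕ) + j)! : R)).det = ∏ i : Fin N, ((i : ℕ)! : R) ^ 2 := by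
  have h_split : (of fun i j : Fin N => (((i : ℕ) + j)! : R)) =
      diagonal (fun i : Fin N => ((i : ℕ)! : R)) *
        of (fun i j : Fin N => (((i : ℕ) + j).choose i : R)) *
        diagonal (fun j : Fin N => ((j : ℕ)! : R)) := by
    ext i j
    rw [mul_diagonal, diagonal_mul, of_apply, of_apply,
      ← Nat.add_choose_mul_factorial_mul_factorial, add_comm (i : ℕ), Nat.choose_symm_add]
    push_cast
    ring
  rw [h_split, det_mul, det_mul, det_diagonal, det_add_choose, mul_one,
    ← prod_mul_distrib]
  simp only [sq]

theorem det_factorial_add_sub_ne_zero [IsDomain R] [CharZero R] {n : ℕ} :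
    (of fun i j : Fin (n + 1) => ((n + (i : ℕ) - j)! : R)).det ≠ 0 := by
  have h_rev : (of fun i j : Fin (n + 1) => ((n + (i : ℕ) - j)! : R)) =
      (of fun i j : Fin (n + 1) => (((i : ℕ) + j)! : R)).submatrix id Fin.revPerm := by
    ext i j
    simp only [submatrix_apply, of_apply, id_eq, Fin.revPerm_apply, Fin.val_rev]
    congr 2
    omega
  rw [h_rev, det_permute', det_factorial_add]
  refine mul_ne_zero (by simp) (prod_ne_zero_iff.2 fun i _ => pow_ne_zero _ ?_)
  exact_mod_cast (i : ℕ).factorial_ne_zero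

end Matrix

/-- The coefficient matrix of the linear system expressing the values `Sh^i` in terms of
the generalized support counts `G_j`, with entries `(j+m)!(n+i−j)!/(n+i+m+1)!`, is
invertible over ℚ. -/
theorem reduction_coefficient_matrix_invertible (n m : ℕ) :
    (Matrix.of fun i j : Fin (n + 1) =>
      (((j : ℕ) + m).factorial : ℚ) * ((n + (i : ℕ) - (j : ℕ)).factorial : ℚ) /
        ((n + (i : ℕ) + m + 1).factorial : ℚ)).det ≠ 0 := by
  have h_scale : (Matrix.of fun i j : Fin (n + 1) =>
      (((j : ℕ) + m).factorial : ℚ) * ((n + (i : ℕ) - (j : ℕ)).factorial : ℚ) /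
        ((n + (i : ℕ) + m + 1).factorial : ℚ)) =
      diagonal (fun i : Fin (n + 1) => ((n + (i : ℕ) + m + 1)! : ℚ)⁻¹) *
        of (fun i j : Fin (n + 1) => ((n + (i : ℕ) - j)! : ℚ)) *
        diagonal (fun j : Fin (n + 1) => (((j : ℕ) + m)! : ℚ)) := by
    ext i j
    rw [mul_diagonal, diagonal_mul, of_apply, of_apply]
    ring
  rw [h_scale, det_mul, det_mul, det_diagonal, det_diagonal]
  refine mul_ne_zero (mul_ne_zero ?_ det_factorial_add_sub_ne_zero) ?_ <;>
    exact prod_ne_zero_iff.2 fun _ _ => by positivity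
end
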